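/- arXiv:1812.11360 — 3 statements merged into one kernel-verified Lean document; each statement's English description precedes it below -/
import Mathlib

section
/- For every integer n ≥ 1 and every integer l with 2 ≤ l ≤ 2n+1, the generalized Petersen graph P(2n+1,1) contains exactly 2n+1 cycles of length 2l, and it contains exactly 2 cycles of length 2n+1. -/
open SimpleGraph

/-- The generalized Petersen graph `P(m,1)`: vertices `(false, i) = uᵢ` (outer) and
`(true, i) = vᵢ` (inner); edges `uᵢuᵢ₊₁`, `vᵢvᵢ₊₁` and spokes `uᵢvᵢ`, indices mod `m`. -/
def GP (m : ℕ) : SimpleGraph (Bool × ZMod m) :=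
  SimpleGraph.fromRel (fun a b =>
    (a.1 = b.1 ∧ b.2 = a.2 + 1) ∨ (a.1 ≠ b.1 ∧ a.2 = b.2))

/-!
A 2-regular subgraph `H` of `P(m,1)` is determined by the rim edges `uᵢuᵢ₊₁`, `vᵢvᵢ₊₁` it
uses: every vertex of `H` uses exactly two of its three edges, so the spoke `uᵢvᵢ` is used iff
exactly one of the two outer edges at `uᵢ` is, iff exactly one of the two inner edges at `vᵢ` is.
Consequently, whether `H` uses `uᵢuᵢ₊₁` and `vᵢvᵢ₊₁` alike does not depend on `i`.

If it does ("aligned"), connectivity forces the used positions to form a single arc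
`i, …, i + k - 1` with `1 ≤ k < m`, and `H` is the ladder cycle `uᵢ … uᵢ₊ₖ vᵢ₊ₖ … vᵢ` on
`2 (k + 1)` vertices. If it does not ("twisted"), every column `{uᵢ, vᵢ}` carries one vertex of
`H`, or two where the spoke is used; the spokes mark the changes of the outer edge pattern around
the cycle, so there is an even number `2c` of them and `H` has `m + 2c` vertices, `c = 0` meaning
that `H` is the outer or the inner rim. For odd `m` the cycles of length `2l` are therefore the
`m` ladders with `k = l - 1`, and those of length `m` are the two rims.
-/

open Finset
open scoped Classical

namespace SimpleGraph

variable {V : Type*} {G : SimpleGraph V}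

def Subgraph.IsTwoRegular (H : G.Subgraph) : Prop :=
  ∀ w ∈ H.verts, (H.neighborSet w).ncard = 2

def cyclesOfLength (G : SimpleGraph V) (L : ℕ) : Set G.Subgraph :=
  {H | H.Connected ∧ H.IsTwoRegular ∧ H.verts.ncard = L}

theorem Subgraph.IsTwoRegular.ncard_neighborSet {H : G.Subgraph} (hH : H.IsTwoRegular) (v : V) :
    (H.neighborSet v).ncard = if v ∈ H.verts then 2 else 0 := by
  split_ifs with hv
  · exact hH v hv
  · rw [show H.neighborSet v = ∅ from Set.eq_empty_of_forall_notMem fun w hw => hv (H.edge_vert hw),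
      Set.ncard_empty]

theorem Subgraph.Connected.verts_subset_of_adj_closed {H : G.Subgraph} (hH : H.Connected)
    {s : Set V} (hs : ∀ x y, H.Adj x y → x ∈ s → y ∈ s) {v : V} (hv : v ∈ H.verts)
    (hvs : v ∈ s) : H.verts ⊆ s := by
  intro w hw
  obtain ⟨p⟩ := hH ⟨v, hv⟩ ⟨w, hw⟩
  have hwalk : ∀ {a b : H.verts}, H.coe.Walk a b → a.1 ∈ s → b.1 ∈ s := by
    intro a b p
    induction p with
    | nil => exact id
    | cons h _ ih => exact fun ha => ih (hs _ _ h ha)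
  exact hwalk p hvs

end SimpleGraph

theorem Set.ncard_setOf_eq_and_or {α : Type*} {a b c : α} (hab : a ≠ b) (hac : a ≠ c)
    (hbc : b ≠ c) (p q r : Prop) :
    {y | y = a ∧ p ∨ y = b ∧ q ∨ y = c ∧ r}.ncard =
      (if p then 1 else 0) + (if q then 1 else 0) + (if r then 1 else 0) := by
  by_cases hp : p <;> by_cases hq : q <;> by_cases hr : r <;>
    simp [hp, hq, hr, Set.ofPred_or, Set.ncard_insert_of_notMem, hab.symm, hac.symm, hbc.symm]

theorem Equiv.Perm.even_sum_ite_xor {α : Type*} [Fintype α] (σ : Equiv.Perm α) (p : α → Prop) :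
    Even (∑ a, if Xor (p (σ a)) (p a) then 1 else 0) := by
  have hterm : ∀ a, (if Xor (p (σ a)) (p a) then 1 else 0) + 2 * (if p (σ a) ∧ p a then 1 else 0) =
      (if p (σ a) then 1 else 0) + (if p a then 1 else 0) := by
    intro a
    by_cases h₁ : p (σ a) <;> by_cases h₂ : p a <;> simp [h₁, h₂, Xor]
  have hsum := sum_congr rfl fun a (_ : a ∈ univ) => hterm a
  rw [sum_add_distrib, sum_add_distrib, ← mul_sum] at hsum
  have hσ := Equiv.sum_comp σ fun a => if p a then 1 else 0
  exact ⟨(∑ a, if p a then 1 else 0) - ∑ a, if p (σ a) ∧ p a then 1 else 0, by omega⟩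

namespace ZMod

variable {m : ℕ}

theorem natCast_ne_zero_of_pos_of_lt {a : ℕ} (ha : 0 < a) (hm : a < m) : (a : ZMod m) ≠ 0 := by
  rw [Ne, ZMod.natCast_eq_zero_iff]
  exact fun h => absurd (Nat.le_of_dvd ha h) (by omega)

variable [NeZero m]

theorem forall_or_forall_not_or_exists_not_sub_one (P : ZMod m → Prop) :
    (∀ i, P i) ∨ (∀ i, ¬P i) ∨ ∃ i, ¬P (i - 1) ∧ P i := by
  by_contra! h
  obtain ⟨⟨i, hi⟩, ⟨j, hj⟩, hdown⟩ := h
  have hP : ∀ n : ℕ, P (j - n) := by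
    intro n
    induction n with
    | zero => simpa using hj
    | succ n ih =>
      by_contra hc
      rw [Nat.cast_succ, ← sub_sub] at hc
      exact hdown _ hc ih
  apply hi
  simpa using hP (j - i).val

theorem val_neg_one_eq : (-1 : ZMod m).val = m - 1 := by
  obtain ⟨n, rfl⟩ : ∃ n, m = n + 1 := ⟨m - 1, by have := NeZero.ne m; omega⟩
  exact ZMod.val_neg_one n

theorem val_sub_one_of_ne_zero {d : ZMod m} (hd : d ≠ 0) : (d - 1).val = d.val - 1 := by
  have hm : 1 < m := by
    by_contra! h
    obtain rfl : m = 1 := by have := NeZero.ne m; omega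
    exact hd (Subsingleton.elim _ _)
  have : Fact (1 < m) := ⟨hm⟩
  rw [ZMod.val_sub (by rw [ZMod.val_one]; exact ZMod.val_pos.2 hd), ZMod.val_one]

theorem sum_ite_val_lt (k : ℕ) : (∑ d : ZMod m, if d.val < k then 1 else 0) = min m k := by
  obtain ⟨n, rfl⟩ : ∃ n, m = n + 1 := ⟨m - 1, by have := NeZero.ne m; omega⟩
  rw [sum_boole, Nat.cast_id]
  exact Fin.card_filter_val_lt

end ZMod

namespace GP

variable {m : ℕ}

theorem adj_add_one (hm : 2 ≤ m) (β : Bool) (i : ZMod m) : (GP m).Adj (β, i) (β, i + 1) := by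
  refine ⟨fun h => ?_, Or.inl (Or.inl ⟨rfl, rfl⟩)⟩
  have h1 := ZMod.natCast_ne_zero_of_pos_of_lt (a := 1) one_pos hm
  simp_all

theorem adj_spoke (i : ZMod m) : (GP m).Adj (false, i) (true, i) :=
  ⟨by simp, Or.inl (Or.inr ⟨by simp, rfl⟩)⟩

def rimEdge (H : (GP m).Subgraph) (β : Bool) (i : ZMod m) : Prop := H.Adj (β, i) (β, i + 1)

def spoke (H : (GP m).Subgraph) (i : ZMod m) : Prop := H.Adj (false, i) (true, i)

def EdgeRel (E : Bool → ZMod m → Prop) (S : ZMod m → Prop) (x y : Bool × ZMod m) : Prop :=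
  (x.1 = y.1 ∧ (y.2 = x.2 + 1 ∧ E x.1 x.2 ∨ x.2 = y.2 + 1 ∧ E x.1 y.2)) ∨
    (x.1 ≠ y.1 ∧ x.2 = y.2 ∧ S x.2)

theorem adj_iff_edgeRel (H : (GP m).Subgraph) {x y : Bool × ZMod m} :
    H.Adj x y ↔ EdgeRel (rimEdge H) (spoke H) x y := by
  obtain ⟨β, i⟩ := x
  obtain ⟨γ, j⟩ := y
  constructor
  · intro h
    have hG := (H.adj_sub h).2
    simp only [ne_eq] at hG
    rcases hG with (⟨rfl, rfl⟩ | ⟨hne, rfl⟩) | (⟨rfl, rfl⟩ | ⟨hne, rfl⟩)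
    · exact Or.inl ⟨rfl, Or.inl ⟨rfl, h⟩⟩
    · exact Or.inr ⟨hne, rfl, by cases β <;> cases γ <;> simp_all [spoke, h.symm]⟩
    · exact Or.inl ⟨rfl, Or.inr ⟨rfl, h.symm⟩⟩
    · exact Or.inr ⟨Ne.symm hne, rfl, by cases β <;> cases γ <;> simp_all [spoke, h.symm]⟩
  · rintro (⟨h₁, ⟨h₂, h⟩ | ⟨h₂, h⟩⟩ | ⟨h₁, h₂, h⟩) <;> simp only at h₁ h₂ h <;> subst h₂
    · exact h₁ ▸ h
    · exact h₁ ▸ h.symm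
    · cases β <;> cases γ <;> simp_all [spoke, h.symm]

theorem neighborSet_eq (H : (GP m).Subgraph) (β : Bool) (i : ZMod m) :
    H.neighborSet (β, i) = {y | y = (β, i - 1) ∧ rimEdge H β (i - 1) ∨
      y = (β, i + 1) ∧ rimEdge H β i ∨ y = (!β, i) ∧ spoke H i} := by
  ext ⟨γ, j⟩
  simp only [Subgraph.mem_neighborSet, adj_iff_edgeRel, EdgeRel, Prod.mk.injEq, Set.mem_ofPred_eq]
  constructor
  · rintro (⟨rfl, ⟨rfl, h⟩ | ⟨rfl, h⟩⟩ | ⟨hne, rfl, h⟩)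
    · exact Or.inr (Or.inl ⟨⟨rfl, rfl⟩, h⟩)
    · exact Or.inl ⟨⟨rfl, by ring⟩, by simpa using h⟩
    · exact Or.inr (Or.inr ⟨⟨by cases β <;> cases γ <;> simp_all, rfl⟩, h⟩)
  · rintro (⟨⟨rfl, rfl⟩, h⟩ | ⟨⟨rfl, rfl⟩, h⟩ | ⟨⟨rfl, rfl⟩, h⟩)
    · exact Or.inl ⟨rfl, Or.inr ⟨by ring, h⟩⟩
    · exact Or.inl ⟨rfl, Or.inl ⟨rfl, h⟩⟩
    · exact Or.inr ⟨by simp, rfl, h⟩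

theorem ncard_neighborSet (hm : 3 ≤ m) (H : (GP m).Subgraph) (β : Bool) (i : ZMod m) :
    (H.neighborSet (β, i)).ncard = (if rimEdge H β (i - 1) then 1 else 0) +
      (if rimEdge H β i then 1 else 0) + (if spoke H i then 1 else 0) := by
  have h2 := ZMod.natCast_ne_zero_of_pos_of_lt (a := 2) two_pos hm
  rw [neighborSet_eq]
  refine Set.ncard_setOf_eq_and_or ?_ (by simp) (by simp) _ _ _
  intro h
  simp only [Prod.mk.injEq, true_and] at h
  exact h2 (by push_cast; linear_combination -h)

variable {H : (GP m).Subgraph}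

theorem mem_verts_iff (hm : 3 ≤ m) (hH : H.IsTwoRegular) (β : Bool) (i : ZMod m) :
    (β, i) ∈ H.verts ↔ rimEdge H β (i - 1) ∨ rimEdge H β i := by
  have h := ncard_neighborSet hm H β i
  rw [hH.ncard_neighborSet] at h
  by_cases hv : (β, i) ∈ H.verts <;> by_cases h₁ : rimEdge H β (i - 1) <;>
    by_cases h₂ : rimEdge H β i <;> by_cases h₃ : spoke H i <;> simp_all

theorem spoke_iff_xor (hm : 3 ≤ m) (hH : H.IsTwoRegular) (β : Bool) (i : ZMod m) :
    spoke H i ↔ Xor (rimEdge H β (i - 1)) (rimEdge H β i) := by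
  have h := ncard_neighborSet hm H β i
  rw [hH.ncard_neighborSet] at h
  by_cases hv : (β, i) ∈ H.verts <;> by_cases h₁ : rimEdge H β (i - 1) <;>
    by_cases h₂ : rimEdge H β i <;> by_cases h₃ : spoke H i <;> simp_all [Xor]

theorem eq_of_rimEdge_eq (hm : 3 ≤ m) {H' : (GP m).Subgraph} (hH : H.IsTwoRegular)
    (hH' : H'.IsTwoRegular) (h : rimEdge H = rimEdge H') : H = H' := by
  have hS : spoke H = spoke H' := by
    ext i
    rw [spoke_iff_xor hm hH false, spoke_iff_xor hm hH' false, h]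
  refine Subgraph.ext ?_ ?_
  · ext ⟨β, i⟩
    rw [mem_verts_iff hm hH, mem_verts_iff hm hH', h]
  · ext x y
    rw [adj_iff_edgeRel, adj_iff_edgeRel, h, hS]

theorem ncard_verts_eq_sum (hm : 3 ≤ m) [NeZero m] (hH : H.IsTwoRegular) :
    H.verts.ncard = ∑ β, ∑ i, if rimEdge H β (i - 1) ∨ rimEdge H β i then 1 else 0 := by
  rw [Set.ncard_eq_toFinset_card', ← Set.filter_mem_univ_eq_toFinset, card_filter,
    Fintype.sum_prod_type]
  simp_rw [mem_verts_iff hm hH]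

theorem reachable_of_rimEdge {β : Bool} {i : ZMod m} {k : ℕ}
    (hE : ∀ t < k, rimEdge H β (i + t)) (hi : (β, i) ∈ H.verts)
    (hk : (β, i + k) ∈ H.verts) : H.coe.Reachable ⟨(β, i), hi⟩ ⟨(β, i + k), hk⟩ := by
  induction k with
  | zero =>
    have : (⟨(β, i + ((0 : ℕ) : ZMod m)), hk⟩ : H.verts) = ⟨(β, i), hi⟩ := by simp
    rw [this]
  | succ k ih =>
    have hEk := hE k (by omega)
    refine (ih (fun t ht => hE t (by omega)) (H.edge_vert hEk)).trans (Adj.reachable ?_)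
    show H.Adj (β, i + k) (β, i + ((k + 1 : ℕ) : ZMod m))
    rw [Nat.cast_succ, ← add_assoc]
    exact hEk

def ofEdges (E : Bool → ZMod m → Prop) (S : ZMod m → Prop) : (GP m).Subgraph where
  verts := {x | E x.1 (x.2 - 1) ∨ E x.1 x.2 ∨ S x.2}
  Adj x y := (GP m).Adj x y ∧ EdgeRel E S x y
  adj_sub h := h.1
  edge_vert := by
    rintro ⟨β, i⟩ ⟨γ, j⟩ ⟨-, ⟨-, ⟨-, h⟩ | ⟨rfl, h⟩⟩ | ⟨-, rfl, h⟩⟩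
    · exact Or.inr (Or.inl h)
    · exact Or.inl (by simpa using h)
    · exact Or.inr (Or.inr h)
  symm := ⟨by
    rintro ⟨β, i⟩ ⟨γ, j⟩ ⟨hG, ⟨h₁, ⟨h₂, h⟩ | ⟨h₂, h⟩⟩ | ⟨h₁, h₂, h⟩⟩ <;>
      simp only at h₁ h₂ h <;> subst h₂
    · exact ⟨hG.symm, Or.inl ⟨h₁.symm, Or.inr ⟨rfl, h₁ ▸ h⟩⟩⟩
    · exact ⟨hG.symm, Or.inl ⟨h₁.symm, Or.inl ⟨rfl, h₁ ▸ h⟩⟩⟩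
    · exact ⟨hG.symm, Or.inr ⟨Ne.symm h₁, rfl, h⟩⟩⟩

theorem rimEdge_ofEdges (hm : 3 ≤ m) (E : Bool → ZMod m → Prop) (S : ZMod m → Prop) :
    rimEdge (ofEdges E S) = E := by
  have h2 := ZMod.natCast_ne_zero_of_pos_of_lt (a := 2) two_pos hm
  ext β i
  have h1 : i ≠ i + 1 + 1 := fun h => h2 (by push_cast; linear_combination -h)
  simp [rimEdge, ofEdges, EdgeRel, adj_add_one (m := m) (by omega), h1]

theorem spoke_ofEdges (E : Bool → ZMod m → Prop) (S : ZMod m → Prop) :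
    spoke (ofEdges E S) = S := by
  ext i
  simp [spoke, ofEdges, EdgeRel, adj_spoke]

theorem isTwoRegular_ofEdges (hm : 3 ≤ m) {E : Bool → ZMod m → Prop} {S : ZMod m → Prop}
    (hS : ∀ β i, S i ↔ Xor (E β (i - 1)) (E β i)) : (ofEdges E S).IsTwoRegular := by
  rintro ⟨β, i⟩ hv
  change E β (i - 1) ∨ E β i ∨ S i at hv
  rw [ncard_neighborSet hm, rimEdge_ofEdges hm, spoke_ofEdges]
  simp only [hS β i] at hv ⊢
  by_cases h₁ : E β (i - 1) <;> by_cases h₂ : E β i <;> simp [h₁, h₂, Xor] at hv ⊢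

def rim (β : Bool) : (GP m).Subgraph := ofEdges (fun γ _ => γ = β) (fun _ => False)

theorem rimEdge_rim (hm : 3 ≤ m) (β : Bool) :
    rimEdge (rim (m := m) β) = fun γ _ => γ = β :=
  rimEdge_ofEdges hm _ _

theorem isTwoRegular_rim (hm : 3 ≤ m) (β : Bool) : (rim (m := m) β).IsTwoRegular :=
  isTwoRegular_ofEdges hm (by simp [Xor])

theorem ncard_verts_rim (hm : 3 ≤ m) (β : Bool) : (rim (m := m) β).verts.ncard = m := by
  have : NeZero m := ⟨by omega⟩
  rw [ncard_verts_eq_sum hm (isTwoRegular_rim hm β), rimEdge_rim hm]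
  cases β <;> simp

theorem rim_connected (hm : 3 ≤ m) (β : Bool) : (rim (m := m) β).Connected := by
  have : NeZero m := ⟨by omega⟩
  have hmem : ∀ i : ZMod m, (β, i) ∈ (rim β).verts := fun i => Or.inl rfl
  rw [Subgraph.connected_iff', connected_iff_exists_forall_reachable]
  refine ⟨⟨(β, 0), hmem 0⟩, ?_⟩
  rintro ⟨⟨γ, j⟩, hv⟩
  obtain rfl : γ = β := by simpa [mem_verts_iff hm (isTwoRegular_rim hm β), rimEdge_rim hm] using hv
  convert reachable_of_rimEdge (k := j.val) (fun t _ => by simp [rimEdge_rim hm]) (hmem 0)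
    (hmem _) using 3
  simp

theorem rim_injective : Function.Injective (rim (m := m)) := by
  intro β β' h
  have : (β, (0 : ZMod m)) ∈ (rim β').verts := h ▸ Or.inl rfl
  simpa [rim, ofEdges] using this

/-- The `k` consecutive positions `i, i + 1, …, i + k - 1`. -/
def arc (i : ZMod m) (k : ℕ) (j : ZMod m) : Prop := (j - i).val < k

theorem arc_add_natCast {i : ZMod m} {k t : ℕ} (ht : t < m) : arc i k (i + t) ↔ t < k := by
  simp [arc, ZMod.val_natCast_of_lt ht]

section arc

variable [NeZero m] {i j : ZMod m} {k : ℕ}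

theorem arc_sub_one_iff (hj : j ≠ i) : arc i k (j - 1) ↔ (j - i).val ≤ k := by
  have hd : j - i ≠ 0 := sub_ne_zero.2 hj
  have := ZMod.val_pos.2 hd
  rw [arc, sub_right_comm, ZMod.val_sub_one_of_ne_zero hd]
  omega

theorem not_arc_self_sub_one (hk : k < m) : ¬arc i k (i - 1) := by
  rw [arc, sub_sub_cancel_left, ZMod.val_neg_one_eq]
  omega

theorem arc_sub_one_or_arc (hk : 0 < k) : arc i k (j - 1) ∨ arc i k j ↔ arc i (k + 1) j := by
  by_cases hj : j = i
  · subst hj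
    simp [arc, hk]
  · rw [arc_sub_one_iff hj, arc, arc]
    omega

theorem xor_arc_sub_one_arc (hk : 0 < k) (hkm : k < m) :
    Xor (arc i k (j - 1)) (arc i k j) ↔ j = i ∨ j = i + k := by
  by_cases hj : j = i
  · subst hj
    simp only [Xor, not_arc_self_sub_one hkm]
    simp [arc, hk]
  · simp only [hj, false_or]
    rw [arc_sub_one_iff hj, arc, ← sub_eq_iff_eq_add', ← (ZMod.val_injective m).eq_iff,
      ZMod.val_natCast_of_lt hkm, xor_iff_not_iff]
    omega

theorem eq_of_arc_of_not_arc_sub_one (h : arc i k j) (h' : ¬arc i k (j - 1)) : j = i := by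
  by_contra hj
  rw [arc_sub_one_iff hj] at h'
  exact h' h.le

theorem sum_arc (i : ZMod m) (k : ℕ) : (∑ j, if arc i k j then 1 else 0) = min m k := by
  convert ((Equiv.subRight i).sum_comp fun d => if d.val < k then 1 else 0).trans
    (ZMod.sum_ite_val_lt k)
  rfl

end arc

/-- The cycle `uᵢ uᵢ₊₁ … uᵢ₊ₖ vᵢ₊ₖ … vᵢ₊₁ vᵢ`. -/
def ladder (i : ZMod m) (k : ℕ) : (GP m).Subgraph :=
  ofEdges (fun _ => arc i k) (fun j => j = i ∨ j = i + k)

section ladder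

variable {i : ZMod m} {k : ℕ}

theorem rimEdge_ladder (hm : 3 ≤ m) : rimEdge (ladder i k) = fun _ => arc i k :=
  rimEdge_ofEdges hm _ _

theorem isTwoRegular_ladder (hm : 3 ≤ m) (hk : 0 < k) (hkm : k < m) :
    (ladder i k).IsTwoRegular :=
  have : NeZero m := ⟨by omega⟩
  isTwoRegular_ofEdges hm fun _ _ => (xor_arc_sub_one_arc hk hkm).symm

theorem ncard_verts_ladder (hm : 3 ≤ m) (hk : 0 < k) (hkm : k < m) :
    (ladder i k).verts.ncard = 2 * (k + 1) := by
  have : NeZero m := ⟨by omega⟩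
  rw [ncard_verts_eq_sum hm (isTwoRegular_ladder hm hk hkm), rimEdge_ladder hm]
  simp only [arc_sub_one_or_arc hk, sum_arc, sum_const, card_univ, Fintype.card_bool, smul_eq_mul]
  omega

theorem ladder_connected (hm : 3 ≤ m) (hk : 0 < k) (hkm : k < m) : (ladder i k).Connected := by
  have : NeZero m := ⟨by omega⟩
  have hH := isTwoRegular_ladder (i := i) hm hk hkm
  have hmem : ∀ β, (β, i) ∈ (ladder i k).verts := fun β => by
    rw [mem_verts_iff hm hH, rimEdge_ladder hm, arc_sub_one_or_arc hk]
    simp [arc]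
  rw [Subgraph.connected_iff', connected_iff_exists_forall_reachable]
  refine ⟨⟨(false, i), hmem false⟩, ?_⟩
  rintro ⟨⟨β, j⟩, hv⟩
  have ht : (j - i).val ≤ k := by
    rw [mem_verts_iff hm hH, rimEdge_ladder hm, arc_sub_one_or_arc hk, arc] at hv
    omega
  have hspoke : (ladder i k).coe.Reachable ⟨(false, i), hmem false⟩ ⟨(β, i), hmem β⟩ := by
    cases β
    · rfl
    · refine Adj.reachable ?_
      show spoke (ladder i k) i
      rw [ladder, spoke_ofEdges]
      exact Or.inl rfl
  have hj : i + ((j - i).val : ZMod m) = j := by simp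
  refine hspoke.trans ?_
  convert reachable_of_rimEdge (k := (j - i).val) (fun s hs => ?_) (hmem β) (by rwa [hj])
    using 3
  · exact hj.symm
  · simp only [rimEdge_ladder hm, arc_add_natCast (show s < m by omega)]
    omega

theorem ladder_left_injective (hm : 3 ≤ m) (hk : 0 < k) (hkm : k < m) :
    Function.Injective (ladder (m := m) · k) := by
  have : NeZero m := ⟨by omega⟩
  intro i i' h
  have harc : arc i k = arc i' k := by
    simpa [rimEdge_ladder hm] using congrArg (fun H => rimEdge H false) h
  refine (eq_of_arc_of_not_arc_sub_one (k := k) ?_ ?_).symm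
  · rw [harc]
    simpa [arc] using hk
  · rw [harc]
    exact not_arc_self_sub_one hkm

end ladder

theorem aligned_or_twisted (hm : 3 ≤ m) (hH : H.IsTwoRegular) :
    (∀ i, rimEdge H false i ↔ rimEdge H true i) ∨
      ∀ i, ¬(rimEdge H false i ↔ rimEdge H true i) := by
  have : NeZero m := ⟨by omega⟩
  rcases ZMod.forall_or_forall_not_or_exists_not_sub_one
    (fun i => rimEdge H false i ↔ rimEdge H true i) with h | h | ⟨i, h₁, h₂⟩
  · exact Or.inl h
  · exact Or.inr h
  · have := (spoke_iff_xor hm hH false i).symm.trans (spoke_iff_xor hm hH true i)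
    simp only [xor_iff_not_iff] at this
    tauto

theorem not_forall_rimEdge_of_aligned (hm : 3 ≤ m) (hconn : H.Connected)
    (hH : H.IsTwoRegular) (hal : ∀ i, rimEdge H false i ↔ rimEdge H true i) :
    ¬∀ i, rimEdge H false i := by
  intro hA
  have hnospoke : ∀ i, ¬spoke H i := fun i => by
    simp [spoke_iff_xor hm hH false, Xor, hA]
  have hclosed : ∀ x y, H.Adj x y → x ∈ {x | x.1 = false} → y ∈ {x | x.1 = false} := by
    rintro ⟨β, i⟩ ⟨γ, j⟩ hxy (rfl : β = false)
    rcases (adj_iff_edgeRel H).1 hxy with ⟨h, -⟩ | ⟨-, rfl, h⟩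
    · exact h.symm
    · exact absurd h (hnospoke i)
  have hsub := hconn.verts_subset_of_adj_closed hclosed (H.edge_vert (hA 0)) rfl
  simpa using hsub (H.edge_vert ((hal 0).1 (hA 0)))

-- The columns `i₀, …, i₀ + k` are closed under adjacency in `H`, so they contain all of `H`.
theorem rimEdge_iff_arc_of_run (hm : 3 ≤ m) (hconn : H.Connected)
    (hal : ∀ i, rimEdge H false i ↔ rimEdge H true i) {i₀ : ZMod m} {k : ℕ} (hk : 0 < k)
    (hkm : k < m) (hbefore : ¬rimEdge H false (i₀ - 1))
    (hrun : ∀ t < k, rimEdge H false (i₀ + t)) (hend : ¬rimEdge H false (i₀ + k))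
    (β : Bool) (j : ZMod m) : rimEdge H β j ↔ arc i₀ k j := by
  have : NeZero m := ⟨by omega⟩
  have hE : ∀ β j, rimEdge H β j ↔ rimEdge H false j := by
    intro β j
    cases β
    · rfl
    · exact (hal j).symm
  have hclosed : ∀ x y, H.Adj x y → x ∈ {x | ∃ t ≤ k, x.2 = i₀ + t} →
      y ∈ {x | ∃ t ≤ k, x.2 = i₀ + t} := by
    rintro ⟨β, j⟩ ⟨γ, j'⟩ hxy ⟨t, htk, hj⟩
    simp only at hj
    subst hj
    rcases (adj_iff_edgeRel H).1 hxy with ⟨-, ⟨rfl, h⟩ | ⟨h', h⟩⟩ | ⟨-, rfl, -⟩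
    · have htk' : t ≠ k := by
        rintro rfl
        exact hend ((hE β _).1 h)
      exact ⟨t + 1, by omega, by push_cast; ring⟩
    · obtain _ | t := t
      · refine absurd ((hE β _).1 h) ?_
        rwa [show j' = i₀ - 1 by simp at h'; linear_combination -h']
      · exact ⟨t, by omega, by push_cast at h'; linear_combination -h'⟩
    · exact ⟨t, htk, rfl⟩
  have hsub := hconn.verts_subset_of_adj_closed hclosed (H.edge_vert (hrun 0 hk)) ⟨0, by omega, rfl⟩
  rw [hE β j]
  constructor
  · intro hA
    obtain ⟨t, htk, rfl⟩ := hsub (H.edge_vert hA)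
    rw [arc_add_natCast (by omega)]
    exact lt_of_le_of_ne htk (by rintro rfl; exact hend hA)
  · intro h
    simpa using hrun _ h

theorem exists_eq_ladder_of_rise (hm : 3 ≤ m) (hconn : H.Connected) (hH : H.IsTwoRegular)
    (hal : ∀ i, rimEdge H false i ↔ rimEdge H true i) {i₀ : ZMod m}
    (hbefore : ¬rimEdge H false (i₀ - 1)) (hstart : rimEdge H false i₀) :
    ∃ k, 0 < k ∧ k < m ∧ H = ladder i₀ k := by
  have hlast : ¬rimEdge H false (i₀ + (m - 1 : ℕ)) := by
    rwa [Nat.cast_sub (by omega), ZMod.natCast_self, Nat.cast_one, zero_sub, ← sub_eq_add_neg]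
  have hex : ∃ t : ℕ, ¬rimEdge H false (i₀ + t) := ⟨m - 1, hlast⟩
  have hk : 0 < Nat.find hex := (Nat.find_pos hex).2 (by simpa using hstart)
  have hkm : Nat.find hex < m := by
    have := Nat.find_min' hex hlast
    omega
  refine ⟨Nat.find hex, hk, hkm, eq_of_rimEdge_eq hm hH (isTwoRegular_ladder hm hk hkm) ?_⟩
  rw [rimEdge_ladder hm]
  ext β j
  exact rimEdge_iff_arc_of_run hm hconn hal hk hkm hbefore
    (fun t ht => not_not.1 (Nat.find_min hex ht)) (Nat.find_spec hex) β j

theorem exists_eq_ladder_of_aligned (hm : 3 ≤ m) (hconn : H.Connected) (hH : H.IsTwoRegular)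
    (hal : ∀ i, rimEdge H false i ↔ rimEdge H true i) :
    ∃ i k, 0 < k ∧ k < m ∧ H = ladder i k := by
  have : NeZero m := ⟨by omega⟩
  rcases ZMod.forall_or_forall_not_or_exists_not_sub_one (rimEdge H false) with
    hA | hA | ⟨i₀, hbefore, hstart⟩
  · exact absurd hA (not_forall_rimEdge_of_aligned hm hconn hH hal)
  · obtain ⟨⟨β, i⟩, hv⟩ := hconn.nonempty
    rw [mem_verts_iff hm hH] at hv
    cases β <;> simp_all
  · exact ⟨i₀, exists_eq_ladder_of_rise hm hconn hH hal hbefore hstart⟩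

theorem eq_rim_of_rimEdge (hm : 3 ≤ m) (hH : H.IsTwoRegular) {β : Bool}
    (h : ∀ γ i, rimEdge H γ i ↔ γ = β) : H = rim β := by
  refine eq_of_rimEdge_eq hm hH (isTwoRegular_rim hm β) ?_
  rw [rimEdge_rim hm]
  ext γ i
  exact h γ i

theorem ncard_verts_of_twisted (hm : 3 ≤ m) [NeZero m] (hH : H.IsTwoRegular)
    (htw : ∀ i, ¬(rimEdge H false i ↔ rimEdge H true i)) :
    H.verts.ncard =
      m + ∑ i, if Xor (rimEdge H false (i - 1)) (rimEdge H false i) then 1 else 0 := by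
  have hcol : ∀ i, ((if rimEdge H true (i - 1) ∨ rimEdge H true i then 1 else 0) +
      if rimEdge H false (i - 1) ∨ rimEdge H false i then 1 else 0) =
        1 + if Xor (rimEdge H false (i - 1)) (rimEdge H false i) then 1 else 0 := by
    intro i
    have h₁ := htw (i - 1)
    have h₂ := htw i
    by_cases hA₁ : rimEdge H false (i - 1) <;> by_cases hA₂ : rimEdge H false i <;>
      simp_all [Xor]
  rw [ncard_verts_eq_sum hm hH, Fintype.sum_bool, ← sum_add_distrib,
    sum_congr rfl fun i _ => hcol i, sum_add_distrib]
  simp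

theorem eq_rim_or_ncard_verts_of_twisted (hm : 3 ≤ m) (hH : H.IsTwoRegular)
    (htw : ∀ i, ¬(rimEdge H false i ↔ rimEdge H true i)) :
    (∃ β, H = rim β) ∨ ∃ c, 0 < c ∧ H.verts.ncard = m + 2 * c := by
  have : NeZero m := ⟨by omega⟩
  obtain ⟨c, hc⟩ : Even (∑ i, if Xor (rimEdge H false (i - 1)) (rimEdge H false i) then 1 else 0) :=
    Equiv.Perm.even_sum_ite_xor (Equiv.subRight 1) _
  have hcard := ncard_verts_of_twisted hm hH htw
  rcases Nat.eq_zero_or_pos c with rfl | hc₀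
  · left
    have hconst : ∀ i, ¬Xor (rimEdge H false (i - 1)) (rimEdge H false i) := by
      intro i hi
      have := (sum_eq_zero_iff.1 hc) i (mem_univ i)
      simp_all
    have hB : ∀ i, rimEdge H true i ↔ ¬rimEdge H false i := fun i => by
      have := htw i
      tauto
    rcases ZMod.forall_or_forall_not_or_exists_not_sub_one (rimEdge H false) with
      hA | hA | ⟨i, h₁, h₂⟩
    · exact ⟨false, eq_rim_of_rimEdge hm hH fun γ i => by cases γ <;> simp [hA, hB]⟩
    · exact ⟨true, eq_rim_of_rimEdge hm hH fun γ i => by cases γ <;> simp [hA, hB]⟩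
    · exact absurd (Or.inr ⟨h₂, h₁⟩) (hconst i)
  · exact Or.inr ⟨c, hc₀, by omega⟩

theorem eq_ladder_or_eq_rim_or_ncard_verts (hm : 3 ≤ m) (hconn : H.Connected)
    (hH : H.IsTwoRegular) :
    (∃ i k, 0 < k ∧ k < m ∧ H = ladder i k) ∨ (∃ β, H = rim β) ∨
      ∃ c, 0 < c ∧ H.verts.ncard = m + 2 * c := by
  rcases aligned_or_twisted hm hH with hal | htw
  · exact Or.inl (exists_eq_ladder_of_aligned hm hconn hH hal)
  · exact Or.inr (eq_rim_or_ncard_verts_of_twisted hm hH htw)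

theorem cyclesOfLength_two_mul (hm : 3 ≤ m) (hodd : Odd m) {l : ℕ} (hl : 2 ≤ l) (hlm : l ≤ m) :
    (GP m).cyclesOfLength (2 * l) = Set.range (ladder · (l - 1)) := by
  obtain ⟨r, hr⟩ := hodd
  ext H
  constructor
  · rintro ⟨hconn, hH, hcard⟩
    rcases eq_ladder_or_eq_rim_or_ncard_verts hm hconn hH with
      ⟨i, k, hk, hkm, rfl⟩ | ⟨β, rfl⟩ | ⟨c, -, hc⟩
    · rw [ncard_verts_ladder hm hk hkm] at hcard
      exact ⟨i, by rw [show l - 1 = k by omega]⟩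
    · rw [ncard_verts_rim hm] at hcard
      omega
    · omega
  · rintro ⟨i, rfl⟩
    exact ⟨ladder_connected hm (by omega) (by omega), isTwoRegular_ladder hm (by omega) (by omega),
      by rw [ncard_verts_ladder hm (by omega) (by omega)]; omega⟩

theorem cyclesOfLength_self (hm : 3 ≤ m) (hodd : Odd m) :
    (GP m).cyclesOfLength m = Set.range rim := by
  obtain ⟨r, hr⟩ := hodd
  ext H
  constructor
  · rintro ⟨hconn, hH, hcard⟩
    rcases eq_ladder_or_eq_rim_or_ncard_verts hm hconn hH with
      ⟨i, k, hk, hkm, rfl⟩ | ⟨β, rfl⟩ | ⟨c, hc₀, hc⟩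
    · rw [ncard_verts_ladder hm hk hkm] at hcard
      omega
    · exact ⟨β, rfl⟩
    · omega
  · rintro ⟨β, rfl⟩
    exact ⟨rim_connected hm β, isTwoRegular_rim hm β, ncard_verts_rim hm β⟩

end GP

theorem GP_cycle_counts (n : ℕ) (hn : 1 ≤ n) :
    (∀ l : ℕ, 2 ≤ l → l ≤ 2 * n + 1 →
      Nat.card {H : (GP (2 * n + 1)).Subgraph //
        H.Connected ∧ (∀ w ∈ H.verts, (H.neighborSet w).ncard = 2) ∧
          H.verts.ncard = 2 * l} = 2 * n + 1) ∧
    Nat.card {H : (GP (2 * n + 1)).Subgraph //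
      H.Connected ∧ (∀ w ∈ H.verts, (H.neighborSet w).ncard = 2) ∧
        H.verts.ncard = 2 * n + 1} = 2 := by
  have hm : 3 ≤ 2 * n + 1 := by omega
  have hodd : Odd (2 * n + 1) := odd_two_mul_add_one n
  refine ⟨fun l hl hlm => ?_, ?_⟩
  · change Nat.card ((GP _).cyclesOfLength (2 * l)) = _
    rw [GP.cyclesOfLength_two_mul hm hodd hl hlm,
      Nat.card_range_of_injective (GP.ladder_left_injective hm (by omega) (by omega)),
      Nat.card_zmod]
  · change Nat.card ((GP _).cyclesOfLength (2 * n + 1)) = _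
    rw [GP.cyclesOfLength_self hm hodd, Nat.card_range_of_injective GP.rim_injective,
      Nat.card_eq_fintype_card, Fintype.card_bool]
end

section
/- The action of the automorphism group of the generalized Petersen graph P(5,1) on the set of matchings of size five of P(5,1) (i.e., its perfect matchings) has exactly 3 orbits; that is, up to the automorphic equivalence, there are exactly 3 matchings of size five in P(5,1). -/
open SimpleGraph

/-- `M` is a matching of `G` (a set of pairwise disjoint edges of `G`). -/
def IsMatchingSet {V : Type*} (G : SimpleGraph V) (M : Finset (Sym2 V)) : Prop :=
  ↑M ⊆ G.edgeSet ∧ ∀ e ∈ M, ∀ f ∈ M, e ≠ f → ∀ x, x ∈ e → x ∉ f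

/-- Two edge sets of `G` are automorphic: some automorphism of `G` carries one to the other. -/
def Automorphic {V : Type*} (G : SimpleGraph V) (S₁ S₂ : Finset (Sym2 V)) : Prop :=
  ∃ φ : G ≃g G, ∀ x y, G.Adj x y → (s(x, y) ∈ S₁ ↔ s(φ x, φ y) ∈ S₂)

/-!
The rotations `(b, i) ↦ (b, i + j)` are automorphisms of `P(5,1)`, and a finite enumeration
shows that every perfect matching is a rotation of one of three matchings: the five spokes, three
spokes together with an outer and an inner rim edge side by side, and one spoke together with two
such pairs of rim edges.
These three are pairwise non-automorphic: call two edges parallel if they are opposite sides of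
a 4-cycle; then the number of parallel pairs of edges of a matching is an automorphism invariant,
and it takes the values 10, 6 and 4 on them.
-/

open Finset

theorem Nat.card_quot_eq_of_invariant {α β ι : Type*} {r : α → α → Prop} (f : α → β)
    (hf : ∀ a b, r a b → f a = f b) (rep : ι → α) (hrep : ∀ a, ∃ i, r (rep i) a)
    (hinj : Function.Injective (f ∘ rep)) : Nat.card (Quot r) = Nat.card ι := by
  refine (Nat.card_eq_of_bijective (fun i => Quot.mk r (rep i)) ⟨fun i j hij => ?_, ?_⟩).symm
  · exact hinj (congrArg (Quot.lift f hf) hij)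
  · refine Quot.ind fun a => ?_
    obtain ⟨i, hi⟩ := hrep a
    exact ⟨i, Quot.sound hi⟩

theorem List.exists_mem_sublistsLen_toFinset_eq {α : Type*} [DecidableEq α] {L : List α}
    (hL : L.Nodup) {M : Finset α} (hM : ∀ a ∈ M, a ∈ L) :
    ∃ l ∈ L.sublistsLen M.card, l.Nodup ∧ l.toFinset = M := by
  set l := L.filter (· ∈ M)
  have hl : l.Nodup := hL.filter _
  have hlM : l.toFinset = M := by
    ext a
    simpa [l] using hM a
  refine ⟨l, List.mem_sublistsLen.2 ⟨L.filter_sublist, ?_⟩, hl, hlM⟩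
  rw [← hlM, List.toFinset_card_of_nodup hl]

section

variable {V : Type*} [DecidableEq V] {G : SimpleGraph V}

instance [Fintype V] [DecidableRel G.Adj] : DecidablePred (IsMatchingSet G) := fun M =>
  inferInstanceAs (Decidable ((∀ e ∈ M, e ∈ G.edgeSet) ∧
    ∀ e ∈ M, ∀ f ∈ M, e ≠ f → ∀ x, x ∈ e → x ∉ f))

theorem IsMatchingSet.pairwise_of_toFinset {l : List (Sym2 V)} (hl : l.Nodup)
    (hM : IsMatchingSet G l.toFinset) : l.Pairwise fun e f => ∀ x, x ∈ e → x ∉ f :=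
  hl.imp_of_mem fun he hf hef => hM.2 _ (List.mem_toFinset.2 he) _ (List.mem_toFinset.2 hf) hef

theorem automorphic_image_map (φ : G ≃g G) (S : Finset (Sym2 V)) :
    Automorphic G S (S.image (Sym2.map φ)) :=
  ⟨φ, fun x y _ => ((Sym2.map.injective φ.injective).mem_finset_image (a := s(x, y))).symm⟩

theorem Automorphic.exists_image_eq {S₁ S₂ : Finset (Sym2 V)} (hS₁ : ↑S₁ ⊆ G.edgeSet)
    (hS₂ : ↑S₂ ⊆ G.edgeSet) (h : Automorphic G S₁ S₂) :
    ∃ φ : G ≃g G, S₁.image (Sym2.map φ) = S₂ := by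
  obtain ⟨φ, hφ⟩ := h
  refine ⟨φ, ext fun e => ⟨?_, fun he => ?_⟩⟩
  · rw [mem_image]
    rintro ⟨e, he, rfl⟩
    induction e with | _ x y =>
    exact (hφ x y (hS₁ he)).1 he
  · induction e with | _ x y =>
    have hxy : G.Adj (φ.symm x) (φ.symm y) := φ.symm.map_adj_iff.2 (hS₂ he)
    exact mem_image.2 ⟨s(φ.symm x, φ.symm y), (hφ _ _ hxy).2 (by simpa using he), by simp⟩

end

namespace SimpleGraph

variable {V W : Type*} {G : SimpleGraph V} {G' : SimpleGraph W}

variable (G) in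
def Parallel (e f : Sym2 V) : Prop :=
  ∃ a b c d, e = s(a, b) ∧ f = s(c, d) ∧ G.Adj a c ∧ G.Adj b d

theorem parallel_mk_iff {a b c d : V} :
    G.Parallel s(a, b) s(c, d) ↔ G.Adj a c ∧ G.Adj b d ∨ G.Adj a d ∧ G.Adj b c := by
  constructor
  · rintro ⟨a', b', c', d', he, hf, hac, hbd⟩
    rw [Sym2.eq_iff] at he hf
    rcases he with ⟨rfl, rfl⟩ | ⟨rfl, rfl⟩ <;>
      rcases hf with ⟨rfl, rfl⟩ | ⟨rfl, rfl⟩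
    · exact .inl ⟨hac, hbd⟩
    · exact .inr ⟨hac, hbd⟩
    · exact .inr ⟨hbd, hac⟩
    · exact .inl ⟨hbd, hac⟩
  · rintro (⟨hac, hbd⟩ | ⟨had, hbc⟩)
    · exact ⟨a, b, c, d, rfl, rfl, hac, hbd⟩
    · exact ⟨a, b, d, c, rfl, Sym2.eq_swap, had, hbc⟩

instance [DecidableRel G.Adj] : DecidableRel G.Parallel := fun e f =>
  e.recOnSubsingleton fun _ _ => f.recOnSubsingleton fun _ _ =>
    decidable_of_iff' _ parallel_mk_iff

theorem Iso.parallel_map_iff (φ : G ≃g G') {e f : Sym2 V} :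
    G'.Parallel (e.map φ) (f.map φ) ↔ G.Parallel e f := by
  induction e with | _ a b =>
  induction f with | _ c d =>
  simp only [Sym2.map_mk, parallel_mk_iff, φ.map_adj_iff]

variable (G) in
def parallelCount [DecidableRel G.Adj] (M : Finset (Sym2 V)) : ℕ :=
  #{p ∈ M.offDiag | G.Parallel p.1 p.2}

theorem Iso.parallelCount_image [DecidableEq W] [DecidableRel G.Adj] [DecidableRel G'.Adj]
    (φ : G ≃g G') (M : Finset (Sym2 V)) :
    G'.parallelCount (M.image (Sym2.map φ)) = G.parallelCount M := by
  have hinj : Function.Injective (Sym2.map φ) := Sym2.map.injective φ.injective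
  have hoff : (M.image (Sym2.map φ)).offDiag =
      M.offDiag.image (Prod.map (Sym2.map φ) (Sym2.map φ)) := by
    ext ⟨e, f⟩
    simp only [mem_offDiag, mem_image, Prod.exists, Prod.map, Prod.mk.injEq]
    constructor
    · rintro ⟨⟨a, ha, rfl⟩, ⟨b, hb, rfl⟩, hab⟩
      exact ⟨a, b, ⟨ha, hb, fun h => hab (h ▸ rfl)⟩, rfl, rfl⟩
    · rintro ⟨a, b, ⟨ha, hb, hab⟩, rfl, rfl⟩
      exact ⟨⟨a, ha, rfl⟩, ⟨b, hb, rfl⟩, hinj.ne hab⟩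
  rw [parallelCount, hoff, filter_image, card_image_of_injective _ (hinj.prodMap hinj)]
  simp [φ.parallel_map_iff, parallelCount]

end SimpleGraph

instance (m : ℕ) : DecidableRel (GP m).Adj := fun a b =>
  decidable_of_iff' _ (fromRel_adj _ a b)

def GP.rotate (m : ℕ) (j : ZMod m) : GP m ≃g GP m where
  toEquiv := (Equiv.refl Bool).prodCongr (Equiv.addRight j)
  map_rel_iff' := by
    rintro ⟨a, x⟩ ⟨b, y⟩
    simp [GP, add_right_comm _ j]

namespace GP5

def edgeList : List (Sym2 (Bool × ZMod 5)) :=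
  [s((false, 0), (false, 1)), s((false, 1), (false, 2)), s((false, 2), (false, 3)),
   s((false, 3), (false, 4)), s((false, 4), (false, 0)),
   s((true, 0), (true, 1)), s((true, 1), (true, 2)), s((true, 2), (true, 3)),
   s((true, 3), (true, 4)), s((true, 4), (true, 0)),
   s((false, 0), (true, 0)), s((false, 1), (true, 1)), s((false, 2), (true, 2)),
   s((false, 3), (true, 3)), s((false, 4), (true, 4))]

theorem edgeList_nodup : edgeList.Nodup := by decide

theorem mem_edgeList_of_adj : ∀ x y, (GP 5).Adj x y → s(x, y) ∈ edgeList := by decide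

def matchingRep : Fin 3 → Finset (Sym2 (Bool × ZMod 5)) := ![
  {s((false, 0), (true, 0)), s((false, 1), (true, 1)), s((false, 2), (true, 2)),
    s((false, 3), (true, 3)), s((false, 4), (true, 4))},
  {s((false, 0), (true, 0)), s((false, 1), (false, 2)), s((true, 1), (true, 2)),
    s((false, 3), (true, 3)), s((false, 4), (true, 4))},
  {s((false, 0), (true, 0)), s((false, 1), (false, 2)), s((true, 1), (true, 2)),
    s((false, 3), (false, 4)), s((true, 3), (true, 4))}]

theorem exists_rotate_eq_matchingRep_of_mem_sublistsLen : ∀ l ∈ edgeList.sublistsLen 5,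
    l.Pairwise (fun e f => ∀ x, x ∈ e → x ∉ f) →
    ∃ k j, l.toFinset = (matchingRep k).image (Sym2.map (GP.rotate 5 j)) := by
  decide +kernel

theorem exists_rotate_eq_matchingRep {M : Finset (Sym2 (Bool × ZMod 5))}
    (hM : IsMatchingSet (GP 5) M) (hcard : M.card = 5) :
    ∃ k j, M = (matchingRep k).image (Sym2.map (GP.rotate 5 j)) := by
  have hedges : ∀ e ∈ M, e ∈ edgeList := fun e he => by
    induction e with | _ x y => exact mem_edgeList_of_adj x y (hM.1 he)
  obtain ⟨l, hl, hnodup, rfl⟩ := List.exists_mem_sublistsLen_toFinset_eq edgeList_nodup hedges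
  exact exists_rotate_eq_matchingRep_of_mem_sublistsLen l (by rwa [hcard] at hl)
    (hM.pairwise_of_toFinset hnodup)

theorem isMatchingSet_matchingRep_and_card :
    ∀ k, IsMatchingSet (GP 5) (matchingRep k) ∧ (matchingRep k).card = 5 := by
  decide +kernel

theorem parallelCount_matchingRep_injective :
    Function.Injective ((GP 5).parallelCount ∘ matchingRep) := by
  decide

end GP5

theorem GP5_matchings_size5_orbits :
    Nat.card (Quot (fun (M₁ M₂ : {M : Finset (Sym2 (Bool × ZMod 5)) //
        IsMatchingSet (GP 5) M ∧ M.card = 5}) =>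
      Automorphic (GP 5) M₁.1 M₂.1)) = 3 := by
  rw [Nat.card_quot_eq_of_invariant (fun M => (GP 5).parallelCount M.1) ?_
    (fun k => ⟨GP5.matchingRep k, GP5.isMatchingSet_matchingRep_and_card k⟩) ?_
    GP5.parallelCount_matchingRep_injective, Nat.card_fin]
  · intro M₁ M₂ h
    obtain ⟨φ, hφ⟩ := Automorphic.exists_image_eq M₁.2.1.1 M₂.2.1.1 h
    exact hφ ▸ (φ.parallelCount_image M₁.1).symm
  · rintro ⟨M, hM, hcard⟩
    obtain ⟨k, j, rfl⟩ := GP5.exists_rotate_eq_matchingRep hM hcard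
    exact ⟨k, automorphic_image_map (GP.rotate 5 j) _⟩
end

section
/- In the generalized Petersen graph P(7,1), consider the seven forbidden edge sets σ₁ = {u₀u₁, v₀v₁, v₂u₂}, σ₂ = {u₀u₁, v₁v₂, u₂u₃}, σ₃ = {u₀u₁, v₁v₂, v₄v₅}, σ₄ = {u₀u₁, v₀v₁, u₃u₄}, σ₅ = {u₀u₁, v₀v₆, u₃u₄}, σ₆ = {u₀v₀, u₁v₁, v₂v₃}, σ₇ = {u₀v₀, u₁v₁, u₂v₂}. If M is a matching of P(7,1) of size l ≥ 3 that contains σᵢ as a subset for some i ∈ {1,…,7}, then the signature M is switching equivalent to a signature of P(7,1) of size at most l − 1. -/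
open SimpleGraph

/-- Two signatures of `G` are switching equivalent: some switching function
`f : V → {±1}` (modelled by `Bool`) turns one into the other. -/
def SwitchEquiv {V : Type*} (G : SimpleGraph V) (S₁ S₂ : Finset (Sym2 V)) : Prop :=
  ∃ f : V → Bool, ∀ x y, G.Adj x y →
    (s(x, y) ∈ S₂ ↔ Xor' (s(x, y) ∈ S₁) (f x ≠ f y))

/-- The outer vertex `uᵢ` of `P(7,1)`. -/
def u (i : ZMod 7) : Bool × ZMod 7 := (false, i)

/-- The inner vertex `vᵢ` of `P(7,1)`. -/
def v (i : ZMod 7) : Bool × ZMod 7 := (true, i)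

/-!
Switching a signature `M` at a vertex set `S` replaces it by `M ∆ δ(S)`, where `δ(S)` is the
edge cut of `S`. If `δ(S)` contains three edges of `M` but has only five edges, the switched
signature has `|M| - 3 + 2 = |M| - 1` edges. Each of the seven configurations `σᵢ` lies in such
a five-edge cut of `P(7,1)`.
-/

open Finset
open scoped symmDiff

theorem Finset.card_symmDiff_add_two_mul_card_le {α : Type*} [DecidableEq α] {s t r : Finset α}
    (hs : r ⊆ s) (ht : r ⊆ t) : #(s ∆ t) + 2 * #r ≤ #s + #t := by
  have hr : #r ≤ #(s ∩ t) := card_le_card (subset_inter hs ht)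
  have hsub : #(s ∆ t) = #(s ∪ t) - #(s ∩ t) := by
    rw [symmDiff_eq_sup_sdiff_inf, sup_eq_union, inf_eq_inter,
      card_sdiff_of_subset inter_subset_union]
  have := card_union_add_card_inter s t
  have := card_le_card (inter_subset_union (s := s) (t := t))
  omega

namespace SimpleGraph

variable {V : Type*} [Fintype V] [DecidableEq V] {G : SimpleGraph V} [DecidableRel G.Adj]

variable (G) in
def edgeCut (S : Finset V) : Finset (Sym2 V) :=
  ((S ×ˢ Sᶜ).filter fun p => G.Adj p.1 p.2).image fun p => s(p.1, p.2)

theorem mem_edgeCut_iff {S : Finset V} {x y : V} (hxy : G.Adj x y) :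
    s(x, y) ∈ G.edgeCut S ↔ (x ∈ S ↔ y ∉ S) := by
  simp only [edgeCut, mem_image, mem_filter, mem_product,
    mem_compl, Prod.exists, Sym2.eq_iff]
  constructor
  · rintro ⟨a, b, ⟨⟨ha, hb⟩, -⟩, ⟨rfl, rfl⟩ | ⟨rfl, rfl⟩⟩ <;> tauto
  · intro h
    by_cases hx : x ∈ S
    · exact ⟨x, y, ⟨⟨hx, h.1 hx⟩, hxy⟩, .inl ⟨rfl, rfl⟩⟩
    · exact ⟨y, x, ⟨⟨by tauto, hx⟩, hxy.symm⟩, .inr ⟨rfl, rfl⟩⟩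

theorem edgeCut_subset_edgeSet (S : Finset V) : ↑(G.edgeCut S) ⊆ G.edgeSet := by
  intro e he
  obtain ⟨⟨a, b⟩, hab, rfl⟩ := mem_image.1 he
  exact (mem_filter.1 hab).2

theorem switchEquiv_symmDiff_edgeCut (M : Finset (Sym2 V)) (S : Finset V) :
    SwitchEquiv G M (M ∆ G.edgeCut S) :=
  ⟨fun x => decide (x ∈ S), fun x y hxy => by
    rw [mem_symmDiff, mem_edgeCut_iff hxy, Xor', xor_iff_iff_not]
    by_cases x ∈ S <;> by_cases y ∈ S <;> simp_all⟩

theorem exists_switchEquiv_card_lt {M σ : Finset (Sym2 V)} {S : Finset V}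
    (hM : ↑M ⊆ G.edgeSet) (hσM : σ ⊆ M) (hσS : σ ⊆ G.edgeCut S)
    (hS : #(G.edgeCut S) < 2 * #σ) :
    ∃ T : Finset (Sym2 V), ↑T ⊆ G.edgeSet ∧ SwitchEquiv G M T ∧ #T < #M := by
  refine ⟨M ∆ G.edgeCut S, ?_, switchEquiv_symmDiff_edgeCut M S, ?_⟩
  · refine subset_trans ?_ (Set.union_subset hM (edgeCut_subset_edgeSet S))
    exact_mod_cast (symmDiff_le_sup : M ∆ G.edgeCut S ≤ M ⊔ G.edgeCut S)
  · have := card_symmDiff_add_two_mul_card_le hσM hσS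
    omega

end SimpleGraph

instance instDecidableRelAdjGP (m : ℕ) : DecidableRel (GP m).Adj := fun _ _ => by
  unfold GP
  rw [SimpleGraph.fromRel_adj]
  infer_instance

theorem GP7_forbidden_matchings_general (M : Finset (Sym2 (Bool × ZMod 7))) (l : ℕ)
    (hM : IsMatchingSet (GP 7) M) (hcard : M.card = l)
    (hforb :
      ({s(u 0, u 1), s(v 0, v 1), s(v 2, u 2)} : Finset (Sym2 (Bool × ZMod 7))) ⊆ M ∨
      ({s(u 0, u 1), s(v 1, v 2), s(u 2, u 3)} : Finset (Sym2 (Bool × ZMod 7))) ⊆ M ∨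
      ({s(u 0, u 1), s(v 1, v 2), s(v 4, v 5)} : Finset (Sym2 (Bool × ZMod 7))) ⊆ M ∨
      ({s(u 0, u 1), s(v 0, v 1), s(u 3, u 4)} : Finset (Sym2 (Bool × ZMod 7))) ⊆ M ∨
      ({s(u 0, u 1), s(v 0, v 6), s(u 3, u 4)} : Finset (Sym2 (Bool × ZMod 7))) ⊆ M ∨
      ({s(u 0, v 0), s(u 1, v 1), s(v 2, v 3)} : Finset (Sym2 (Bool × ZMod 7))) ⊆ M ∨
      ({s(u 0, v 0), s(u 1, v 1), s(u 2, v 2)} : Finset (Sym2 (Bool × ZMod 7))) ⊆ M) :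
    ∃ T : Finset (Sym2 (Bool × ZMod 7)), ↑T ⊆ (GP 7).edgeSet ∧
      SwitchEquiv (GP 7) M T ∧ T.card ≤ l - 1 := by
  obtain ⟨T, hT, hMT, hTM⟩ :
      ∃ T : Finset (Sym2 (Bool × ZMod 7)), ↑T ⊆ (GP 7).edgeSet ∧ SwitchEquiv (GP 7) M T ∧
        #T < #M := by
    rcases hforb with h | h | h | h | h | h | h
    exacts [exists_switchEquiv_card_lt (S := {u 1, u 2, v 1}) hM.1 h (by decide) (by decide),
      exists_switchEquiv_card_lt (S := {u 1, u 2, v 1}) hM.1 h (by decide) (by decide),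
      exists_switchEquiv_card_lt (S := {u 0, u 5, u 6, v 0, v 1, v 5, v 6}) hM.1 h
        (by decide) (by decide),
      exists_switchEquiv_card_lt (S := {u 1, u 2, u 3, v 1, v 2}) hM.1 h (by decide) (by decide),
      exists_switchEquiv_card_lt (S := {u 0, u 4, u 5, u 6, v 4, v 5, v 6}) hM.1 h
        (by decide) (by decide),
      exists_switchEquiv_card_lt (S := {v 0, v 1, v 2}) hM.1 h (by decide) (by decide),
      exists_switchEquiv_card_lt (S := {u 0, u 1, u 2}) hM.1 h (by decide) (by decide)]
  exact ⟨T, hT, hMT, by omega⟩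

theorem GP7_forbidden_matchings (M : Finset (Sym2 (Bool × ZMod 7))) (l : ℕ)
    (hM : IsMatchingSet (GP 7) M) (hcard : M.card = l) (hl : 3 ≤ l)
    (hforb :
      ({s(u 0, u 1), s(v 0, v 1), s(v 2, u 2)} : Finset (Sym2 (Bool × ZMod 7))) ⊆ M ∨
      ({s(u 0, u 1), s(v 1, v 2), s(u 2, u 3)} : Finset (Sym2 (Bool × ZMod 7))) ⊆ M ∨
      ({s(u 0, u 1), s(v 1, v 2), s(v 4, v 5)} : Finset (Sym2 (Bool × ZMod 7))) ⊆ M ∨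
      ({s(u 0, u 1), s(v 0, v 1), s(u 3, u 4)} : Finset (Sym2 (Bool × ZMod 7))) ⊆ M ∨
      ({s(u 0, u 1), s(v 0, v 6), s(u 3, u 4)} : Finset (Sym2 (Bool × ZMod 7))) ⊆ M ∨
      ({s(u 0, v 0), s(u 1, v 1), s(v 2, v 3)} : Finset (Sym2 (Bool × ZMod 7))) ⊆ M ∨
      ({s(u 0, v 0), s(u 1, v 1), s(u 2, v 2)} : Finset (Sym2 (Bool × ZMod 7))) ⊆ M) :
    ∃ T : Finset (Sym2 (Bool × ZMod 7)), ↑T ⊆ (GP 7).edgeSet ∧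
      SwitchEquiv (GP 7) M T ∧ T.card ≤ l - 1 :=
  GP7_forbidden_matchings_general M l hM hcard hforb
end
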